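/- arXiv:1210.3512 — 5 statements merged into one kernel-verified Lean document; each statement's English description precedes it below -/
import Mathlib

section
/- For any fixed λ > 0 and g > 0, the function f ↦ f·(2^(λ/f) − 1)/g is strictly convex on the positive reals f > 0. -/
open Set Real Filter

private lemma hder1 (c g : ℝ) {x : ℝ} (hx : x ≠ 0) :
    HasDerivAt (fun f : ℝ => f * (Real.exp (c / f) - 1) / g)
      ((Real.exp (c / x) * (1 - c / x) - 1) / g) x := by
  have h1 : HasDerivAt (fun f : ℝ => c / f) (-(c / x ^ 2)) x := by
    simpa [div_eq_mul_inv, mul_comm, neg_mul, mul_neg] using (hasDerivAt_inv hx).const_mul c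
  have h3 := ((hasDerivAt_id x).mul ((h1.exp).sub_const 1)).div_const g
  convert h3 using 1
  · rfl
  · rfl
  congr 1
  simp only [id]
  field_simp
  ring

private lemma hder2 (c g : ℝ) {x : ℝ} (hx : x ≠ 0) :
    HasDerivAt (fun f : ℝ => (Real.exp (c / f) * (1 - c / f) - 1) / g)
      (Real.exp (c / x) * (c ^ 2 / x ^ 3) / g) x := by
  have h1 : HasDerivAt (fun f : ℝ => c / f) (-(c / x ^ 2)) x := by
    simpa [div_eq_mul_inv, mul_comm, neg_mul, mul_neg] using (hasDerivAt_inv hx).const_mul c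
  have hlin : HasDerivAt (fun f : ℝ => 1 - c / f) (c / x ^ 2) x := by
    simpa using h1.const_sub 1
  have h3 := ((h1.exp.mul hlin).sub_const 1).div_const g
  convert h3 using 1
  · rfl
  · rfl
  congr 1
  field_simp
  ring

theorem stmt_0 (lam g : ℝ) (hlam : 0 < lam) (hg : 0 < g) :
    StrictConvexOn ℝ (Set.Ioi (0:ℝ))
      (fun f : ℝ => f * ((2:ℝ) ^ (lam / f) - 1) / g) := by
  set c := lam * Real.log 2 with hc
  have hcpos : 0 < c := mul_pos hlam (Real.log_pos one_lt_two)
  have hfun : (fun f : ℝ => f * ((2:ℝ) ^ (lam / f) - 1) / g)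
      = fun f : ℝ => f * (Real.exp (c / f) - 1) / g := by
    funext f
    rw [Real.rpow_def_of_pos (by norm_num : (0:ℝ) < 2), hc]
    ring_nf
  rw [hfun]
  apply strictConvexOn_of_deriv2_pos (convex_Ioi 0)
  · apply ContinuousOn.div_const
    apply ContinuousOn.mul continuousOn_id
    apply ContinuousOn.sub _ continuousOn_const
    exact (continuousOn_const.div continuousOn_id fun x hx => ne_of_gt hx).rexp
  · intro x hx
    rw [interior_Ioi] at hx
    have hx0 : x ≠ 0 := ne_of_gt hx
    have hev : deriv (fun f : ℝ => f * (Real.exp (c / f) - 1) / g)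
        =ᶠ[nhds x] fun y => (Real.exp (c / y) * (1 - c / y) - 1) / g := by
      filter_upwards [eventually_ne_nhds hx0] with y hy using (hder1 c g hy).deriv
    have h2 : deriv^[2] (fun f : ℝ => f * (Real.exp (c / f) - 1) / g) x
        = Real.exp (c / x) * (c ^ 2 / x ^ 3) / g := by
      simp only [Function.iterate_succ, Function.iterate_zero, Function.comp_apply, id]
      rw [hev.deriv_eq, (hder2 c g hx0).deriv]
    rw [h2]
    exact div_pos (mul_pos (Real.exp_pos _) (div_pos (pow_pos hcpos 2) (pow_pos hx 3))) hg
end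

section
/- Let g > 0, β > 0, P > 0 satisfy (P·g + 1)(1 − ln(1 + P·g)) + β·g − 1 = 0. If P(g) is a differentiable function of g satisfying this identity on an interval, then P'(g) = (ln(1 + P·g) − P·g) / (g² · ln(1 + P·g)) < 0; i.e., the optimal power is strictly decreasing in the channel gain. -/
open Filter Topology

theorem stmt_5 (g β P' : ℝ) (P : ℝ → ℝ) (hg : 0 < g) (hβ : 0 < β)
    (hPpos : 0 < P g)
    (heq : ∀ᶠ x in 𝓝 g,
      (P x * x + 1) * (1 - Real.log (1 + P x * x)) + β * x - 1 = 0)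
    (hderiv : HasDerivAt P P' g) :
    P' = (Real.log (1 + P g * g) - P g * g) / (g ^ 2 * Real.log (1 + P g * g)) ∧
      P' < 0 := by
  set u : ℝ := P g * g with hu_def
  have hu : 0 < u := mul_pos hPpos hg
  set L : ℝ := Real.log (1 + u) with hL_def
  have hL : 0 < L := Real.log_pos (by linarith)
  have hne : (1 : ℝ) + P g * g ≠ 0 := by positivity
  -- derivative of u(x) = P x * x
  have hU : HasDerivAt (fun x => P x * x) (P' * g + P g * 1) g :=
    hderiv.mul (hasDerivAt_id g)
  have hlog : HasDerivAt (fun x => Real.log (1 + P x * x))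
      ((P' * g + P g * 1) / (1 + P g * g)) g := by
    simpa using ((hasDerivAt_const g (1:ℝ)).add hU).log hne
  have hF : HasDerivAt
      (fun x => (P x * x + 1) * (1 - Real.log (1 + P x * x)) + β * x - 1)
      ((P' * g + P g * 1) * (1 - L) +
        (P g * g + 1) * (0 - (P' * g + P g * 1) / (1 + P g * g)) + (β * 1)) g := by
    simpa using (((hU.add_const 1).mul ((hasDerivAt_const g (1:ℝ)).sub hlog)).add
      ((hasDerivAt_const g β).mul (hasDerivAt_id g))).sub_const 1
  have hzero : HasDerivAt (fun _ : ℝ => (0:ℝ))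
      ((P' * g + P g * 1) * (1 - L) +
        (P g * g + 1) * (0 - (P' * g + P g * 1) / (1 + P g * g)) + (β * 1)) g :=
    hF.congr_of_eventuallyEq (heq.mono fun x hx => hx.symm)
  have hD0 : (P' * g + P g * 1) * (1 - L) +
      (P g * g + 1) * (0 - (P' * g + P g * 1) / (1 + P g * g)) + (β * 1) = 0 :=
    hzero.unique (hasDerivAt_const g 0)
  have hβL : β = (P' * g + P g) * L := by
    field_simp at hD0
    nlinarith [hD0]
  have hEq0 : (u + 1) * (1 - L) + β * g - 1 = 0 := by
    have := heq.self_of_nhds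
    simpa [hu_def, hL_def] using this
  have hg0 : g ≠ 0 := ne_of_gt hg
  have hL0 : L ≠ 0 := ne_of_gt hL
  have hP'eq : P' = (L - u) / (g ^ 2 * L) := by
    rw [eq_div_iff (by positivity)]
    nlinarith [hEq0, hβL]
  have hLu : L < u := by
    have := Real.log_lt_sub_one_of_pos (x := 1 + u) (by linarith) (by linarith)
    simpa [hL_def] using this
  refine ⟨hP'eq, ?_⟩
  rw [hP'eq]
  exact div_neg_of_neg_of_pos (by linarith) (by positivity)
end

section
/- Let β, g₁, g₂ > 0 with g₁ > g₂ and βg₁ < 1, βg₂ < 1. Let R₁, R₂ > 0 be the unique solutions of 2^{R_i}(1 − R_i ln 2) = 1 − β g_i, and set P_i = (2^{R_i} − 1)/g_i. Then P₁ < P₂. -/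
open Real Set

private lemma q_cont : ContinuousOn (fun x : ℝ => x * Real.log x - x + 1) (Ici 1) := by
  apply ContinuousOn.add
  · apply ContinuousOn.sub
    · exact continuousOn_id.mul (Real.continuousOn_log.mono (by
        intro x hx; simp at hx ⊢; linarith [hx]))
    · exact continuousOn_id
  · exact continuousOn_const

private lemma q_mono : StrictMonoOn (fun x : ℝ => x * Real.log x - x + 1) (Ici 1) := by
  apply strictMonoOn_of_deriv_pos (convex_Ici 1) q_cont
  intro x hx
  rw [interior_Ici] at hx
  have hx1 : (1:ℝ) < x := hx
  have hx0 : x ≠ 0 := by linarith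
  have hd : HasDerivAt (fun x : ℝ => x * Real.log x - x + 1) (Real.log x) x := by
    have h1 : HasDerivAt (fun x : ℝ => x * Real.log x) (1 * Real.log x + x * x⁻¹) x :=
      (hasDerivAt_id x).mul (Real.hasDerivAt_log hx0)
    have h2 := (h1.sub (hasDerivAt_id x)).add_const 1
    refine h2.congr_deriv ?_
    rw [mul_inv_cancel₀ hx0]; ring
  rw [hd.deriv]
  exact Real.log_pos hx1

private lemma F_mono : StrictMonoOn
    (fun x : ℝ => (x * Real.log x - x + 1) / (x - 1)) (Ioi 1) := by
  apply strictMonoOn_of_deriv_pos (convex_Ioi 1)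
  · apply ContinuousOn.div₀ (q_cont.mono Ioi_subset_Ici_self)
    · exact continuousOn_id.sub continuousOn_const
    · intro x hx
      have hx1 : (1:ℝ) < x := hx
      intro h
      have := sub_eq_zero.mp h
      linarith
  · intro x hx
    rw [interior_Ioi] at hx
    have hx1 : (1:ℝ) < x := hx
    have hx0 : x ≠ 0 := by linarith
    have hne : x - 1 ≠ 0 := by intro h; have := sub_eq_zero.mp h; linarith
    have hN : HasDerivAt (fun x : ℝ => x * Real.log x - x + 1) (Real.log x) x := by
      have h1 : HasDerivAt (fun x : ℝ => x * Real.log x) (1 * Real.log x + x * x⁻¹) x :=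
        (hasDerivAt_id x).mul (Real.hasDerivAt_log hx0)
      have h2 := (h1.sub (hasDerivAt_id x)).add_const 1
      refine h2.congr_deriv ?_; rw [mul_inv_cancel₀ hx0]; ring
    have hD : HasDerivAt (fun x : ℝ => x - 1) 1 x := (hasDerivAt_id x).sub_const 1
    have hF := hN.fun_div hD hne
    rw [hF.deriv]
    have hlog : Real.log x < x - 1 := Real.log_lt_sub_one_of_pos (by linarith) (by linarith)
    have heq : Real.log x * (x - 1) - (x * Real.log x - x + 1) * 1 = x - 1 - Real.log x := by ring
    rw [heq]
    apply div_pos (by linarith)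
    positivity

theorem stmt_9 (β g₁ g₂ R₁ R₂ : ℝ) (hβ : 0 < β) (hg₂ : 0 < g₂) (hg : g₂ < g₁)
    (hβg₁ : β * g₁ < 1) (hβg₂ : β * g₂ < 1)
    (hR₁ : 0 < R₁) (hR₂ : 0 < R₂)
    (h1 : (2:ℝ) ^ R₁ * (1 - R₁ * Real.log 2) = 1 - β * g₁)
    (h2 : (2:ℝ) ^ R₂ * (1 - R₂ * Real.log 2) = 1 - β * g₂) :
    ((2:ℝ) ^ R₁ - 1) / g₁ < ((2:ℝ) ^ R₂ - 1) / g₂ := by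
  have hg₁ : 0 < g₁ := lt_trans hg₂ hg
  set x₁ := (2:ℝ) ^ R₁ with hx₁def
  set x₂ := (2:ℝ) ^ R₂ with hx₂def
  have hlog1 : Real.log x₁ = R₁ * Real.log 2 := Real.log_rpow (by norm_num) R₁
  have hlog2 : Real.log x₂ = R₂ * Real.log 2 := Real.log_rpow (by norm_num) R₂
  have hx₁ : 1 < x₁ := (Real.one_lt_rpow_iff_of_pos (by norm_num)).mpr (Or.inl ⟨by norm_num, hR₁⟩)
  have hx₂ : 1 < x₂ := (Real.one_lt_rpow_iff_of_pos (by norm_num)).mpr (Or.inl ⟨by norm_num, hR₂⟩)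
  have hq1 : x₁ * Real.log x₁ - x₁ + 1 = β * g₁ := by rw [hlog1]; nlinarith [h1]
  have hq2 : x₂ * Real.log x₂ - x₂ + 1 = β * g₂ := by rw [hlog2]; nlinarith [h2]
  have hβg : β * g₂ < β * g₁ := by nlinarith
  have hx21 : x₂ < x₁ := by
    exact (q_mono.lt_iff_lt (le_of_lt hx₂) (le_of_lt hx₁)).mp
      (by show x₂ * Real.log x₂ - x₂ + 1 < x₁ * Real.log x₁ - x₁ + 1; rw [hq1, hq2]; exact hβg)
  have hF := F_mono (mem_Ioi.mpr hx₂) (mem_Ioi.mpr hx₁) hx21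
  have hF' : β * g₂ / (x₂ - 1) < β * g₁ / (x₁ - 1) := by
    rw [← hq1, ← hq2]; exact hF
  -- hF : β * g₂ / (x₂ - 1) < β * g₁ / (x₁ - 1)
  have hx₁1 : 0 < x₁ - 1 := by linarith
  have hx₂1 : 0 < x₂ - 1 := by linarith
  rw [div_lt_div_iff₀ hx₂1 hx₁1] at hF'
  rw [div_lt_div_iff₀ hg₁ hg₂]
  nlinarith [hF', mul_pos hx₁1 hg₂, mul_pos hx₂1 hg₁]
end

section
/- If (f_i, R_i) for i = 1,…,5 satisfy f_i ≥ 0, R_i ≥ 0, the queue-stability constraints λ₁ ≤ min(f₁R₁, f₃R₃ + f₅R₅), λ₂ ≤ min(f₂R₂, f₃R₃ + f₄R₄), and λ₁ = λ₂ > 0, then there exists another feasible point (f_i', R_i') with f₄' = f₅' = 0, Σf_i' ≤ Σf_i, and total energy Σ f_i' P(R_i')/g_i no larger than Σ f_i P(R_i)/g_i, where P(R)/g = (2^R − 1)/g. -/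
open Finset

lemma jensen2 (a b p q : ℝ) (ha : 0 ≤ a) (hb : 0 < b) :
    (a + b) * (2:ℝ) ^ ((a * p + b * q) / (a + b)) ≤ a * (2:ℝ) ^ p + b * (2:ℝ) ^ q := by
  have hs : 0 < a + b := by linarith
  have h2 : (0:ℝ) < 2 := two_pos
  have key := convexOn_exp.2 (Set.mem_univ (Real.log 2 * p)) (Set.mem_univ (Real.log 2 * q))
      (div_nonneg ha hs.le) (div_nonneg hb.le hs.le)
      (by field_simp)
  simp only [smul_eq_mul] at key
  rw [Real.rpow_def_of_pos h2, Real.rpow_def_of_pos h2, Real.rpow_def_of_pos h2]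
  have heq : Real.log 2 * ((a * p + b * q) / (a + b))
      = a / (a + b) * (Real.log 2 * p) + b / (a + b) * (Real.log 2 * q) := by
    field_simp
  rw [heq]
  have := mul_le_mul_of_nonneg_left key hs.le
  calc (a + b) * Real.exp (a / (a + b) * (Real.log 2 * p) + b / (a + b) * (Real.log 2 * q))
      ≤ (a + b) * (a / (a + b) * Real.exp (Real.log 2 * p)
          + b / (a + b) * Real.exp (Real.log 2 * q)) := this
    _ = a * Real.exp (Real.log 2 * p) + b * Real.exp (Real.log 2 * q) := by
        field_simp

lemma one_le_two_rpow (r : ℝ) (hr : 0 ≤ r) : (1:ℝ) ≤ (2:ℝ) ^ r := by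
  have := Real.rpow_le_rpow_of_exponent_le (by norm_num : (1:ℝ) ≤ 2) hr
  simpa using this

theorem stmt_10 (lam1 lam2 : ℝ) (g f R : Fin 5 → ℝ)
    (hlam : lam1 = lam2) (hpos : 0 < lam1)
    (hg : ∀ i, 0 < g i) (hg3 : g 2 = min (g 3) (g 4))
    (hf : ∀ i, 0 ≤ f i) (hR : ∀ i, 0 ≤ R i)
    (hc1 : lam1 ≤ min (f 0 * R 0) (f 2 * R 2 + f 4 * R 4))
    (hc2 : lam2 ≤ min (f 1 * R 1) (f 2 * R 2 + f 3 * R 3)) :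
    ∃ f' R' : Fin 5 → ℝ,
      (∀ i, 0 ≤ f' i) ∧ (∀ i, 0 ≤ R' i) ∧
      f' 3 = 0 ∧ f' 4 = 0 ∧
      lam1 ≤ min (f' 0 * R' 0) (f' 2 * R' 2 + f' 4 * R' 4) ∧
      lam2 ≤ min (f' 1 * R' 1) (f' 2 * R' 2 + f' 3 * R' 3) ∧
      (∑ i, f' i) ≤ (∑ i, f i) ∧
      (∑ i, f' i * ((2:ℝ) ^ (R' i) - 1) / g i) ≤
        (∑ i, f i * ((2:ℝ) ^ (R i) - 1) / g i) := by
  have hterm : ∀ i : Fin 5, 0 ≤ f i * ((2:ℝ) ^ (R i) - 1) / g i := fun i =>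
    div_nonneg (mul_nonneg (hf i) (by linarith [one_le_two_rpow (R i) (hR i)])) (hg i).le
  have hc1a := (le_min_iff.mp hc1).1
  have hc1b := (le_min_iff.mp hc1).2
  have hc2a := (le_min_iff.mp hc2).1
  have hc2b := (le_min_iff.mp hc2).2
  rcases le_or_gt lam1 (f 2 * R 2) with hA | hB
  · refine ⟨![f 0, f 1, f 2, 0, 0], ![R 0, R 1, R 2, 0, 0], ?_, ?_, rfl, rfl, ?_, ?_, ?_, ?_⟩
    · intro i; fin_cases i <;> simp [hf 0, hf 1, hf 2]
    · intro i; fin_cases i <;> simp [hR 0, hR 1, hR 2]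
    · show lam1 ≤ min (f 0 * R 0) (f 2 * R 2 + 0 * 0)
      rw [le_min_iff]
      exact ⟨hc1a, by linarith⟩
    · show lam2 ≤ min (f 1 * R 1) (f 2 * R 2 + 0 * 0)
      rw [le_min_iff]
      exact ⟨hc2a, by rw [← hlam]; linarith⟩
    · rw [Fin.sum_univ_five, Fin.sum_univ_five]
      show f 0 + f 1 + f 2 + 0 + 0 ≤ _
      linarith [hf 3, hf 4]
    · rw [Fin.sum_univ_five, Fin.sum_univ_five]
      show f 0 * ((2:ℝ) ^ (R 0) - 1) / g 0 + f 1 * ((2:ℝ) ^ (R 1) - 1) / g 1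
          + f 2 * ((2:ℝ) ^ (R 2) - 1) / g 2 + 0 * ((2:ℝ) ^ (0:ℝ) - 1) / g 3
          + 0 * ((2:ℝ) ^ (0:ℝ) - 1) / g 4 ≤ _
      have h3 := hterm 3
      have h4 := hterm 4
      simp only [zero_mul, zero_div]
      linarith
  · -- Case B : f 2 * R 2 < lam1
    set d : ℝ := lam1 - f 2 * R 2 with hd_def
    have hd : 0 < d := by simp only [hd_def]; linarith
    have h3 := hterm 3
    have h4 := hterm 4
    have hmain : ∀ (j : Fin 5), j = 3 ∨ j = 4 → g 2 = g j → d ≤ f j * R j →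
        ∃ f' R' : Fin 5 → ℝ,
          (∀ i, 0 ≤ f' i) ∧ (∀ i, 0 ≤ R' i) ∧
          f' 3 = 0 ∧ f' 4 = 0 ∧
          lam1 ≤ min (f' 0 * R' 0) (f' 2 * R' 2 + f' 4 * R' 4) ∧
          lam2 ≤ min (f' 1 * R' 1) (f' 2 * R' 2 + f' 3 * R' 3) ∧
          (∑ i, f' i) ≤ (∑ i, f i) ∧
          (∑ i, f' i * ((2:ℝ) ^ (R' i) - 1) / g i) ≤
            (∑ i, f i * ((2:ℝ) ^ (R i) - 1) / g i) := by
      intro j hj34 hgj hdj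
      have hRj : 0 < R j := by
        rcases (hR j).lt_or_eq with h | h
        · exact h
        · exfalso; rw [← h, mul_zero] at hdj; linarith
      set t : ℝ := d / R j with ht_def
      have ht0 : 0 < t := div_pos hd hRj
      have htf : t ≤ f j := by
        rw [ht_def, div_le_iff₀ hRj]; exact hdj
      have htR : t * R j = d := div_mul_cancel₀ d hRj.ne'
      have hft : 0 < f 2 + t := by linarith [hf 2]
      have hX : (0:ℝ) ≤ (2:ℝ) ^ (R j) - 1 := by
        linarith [one_le_two_rpow (R j) (hR j)]
      refine ⟨![f 0, f 1, f 2 + t, 0, 0], ![R 0, R 1, lam1 / (f 2 + t), 0, 0],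
        ?_, ?_, rfl, rfl, ?_, ?_, ?_, ?_⟩
      · intro i; fin_cases i <;> simp [hf 0, hf 1] <;> linarith [hf 2]
      · intro i; fin_cases i <;>
          simp [hR 0, hR 1, le_div_iff₀ hft, hpos.le]
      · show lam1 ≤ min (f 0 * R 0) ((f 2 + t) * (lam1 / (f 2 + t)) + 0 * 0)
        rw [mul_div_cancel₀ lam1 hft.ne']
        rw [le_min_iff]
        exact ⟨hc1a, by linarith⟩
      · show lam2 ≤ min (f 1 * R 1) ((f 2 + t) * (lam1 / (f 2 + t)) + 0 * 0)
        rw [mul_div_cancel₀ lam1 hft.ne']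
        rw [le_min_iff]
        exact ⟨hc2a, by rw [← hlam]; linarith⟩
      · rw [Fin.sum_univ_five, Fin.sum_univ_five]
        show f 0 + f 1 + (f 2 + t) + 0 + 0 ≤ _
        rcases hj34 with h | h <;> subst h <;> linarith [hf 3, hf 4]
      · rw [Fin.sum_univ_five, Fin.sum_univ_five]
        show f 0 * ((2:ℝ) ^ (R 0) - 1) / g 0 + f 1 * ((2:ℝ) ^ (R 1) - 1) / g 1
            + (f 2 + t) * ((2:ℝ) ^ (lam1 / (f 2 + t)) - 1) / g 2
            + 0 * ((2:ℝ) ^ (0:ℝ) - 1) / g 3 + 0 * ((2:ℝ) ^ (0:ℝ) - 1) / g 4 ≤ _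
        have hlam_eq : lam1 = f 2 * R 2 + t * R j := by rw [htR, hd_def]; ring
        have hjen := jensen2 (f 2) t (R 2) (R j) (hf 2) ht0
        have hkey : (f 2 + t) * ((2:ℝ) ^ (lam1 / (f 2 + t)) - 1) / g 2
            ≤ f 2 * ((2:ℝ) ^ (R 2) - 1) / g 2 + t * ((2:ℝ) ^ (R j) - 1) / g 2 := by
          rw [← add_div, div_le_div_iff_of_pos_right (hg 2)]
          have heq2 : lam1 / (f 2 + t) = (f 2 * R 2 + t * R j) / (f 2 + t) := by
            rw [← hlam_eq]
          rw [heq2]; nlinarith [hjen]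
        have hgj2 : t * ((2:ℝ) ^ (R j) - 1) / g 2 ≤ f j * ((2:ℝ) ^ (R j) - 1) / g j := by
          rw [hgj]
          gcongr
          exact (hg j).le
        have hfj : f j * ((2:ℝ) ^ (R j) - 1) / g j
            ≤ f 3 * ((2:ℝ) ^ (R 3) - 1) / g 3 + f 4 * ((2:ℝ) ^ (R 4) - 1) / g 4 := by
          rcases hj34 with h | h <;> subst h <;> linarith
        simp only [zero_mul, zero_div]
        linarith
    rcases le_total (g 3) (g 4) with h34 | h34
    · refine hmain 3 (Or.inl rfl) (by rw [hg3, min_eq_left h34]) ?_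
      have := hlam ▸ hc2b
      simp only [hd_def]; linarith
    · refine hmain 4 (Or.inr rfl) (by rw [hg3, min_eq_right h34]) ?_
      simp only [hd_def]; linarith
end

section
/- Let c(ḡ) > 0 be differentiable and satisfy, for all ḡ in an interval, ∫_1^∞ (c/g² − c/g)·e^{−g/(cḡ)} dg + γ = 0 for a constant γ > 0. Then c'(ḡ) and d(ḡ·c(ḡ))/dḡ have opposite signs; moreover c'(ḡ) < 0 and d(ḡ·c)/dḡ > 0. -/
open Set MeasureTheory

noncomputable def Jfun (t : ℝ) : ℝ :=
  ∫ g in Set.Ioi (1:ℝ), (1/g^2 - 1/g) * Real.exp (-g/t)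

lemma J_deriv {t0 : ℝ} (ht0 : 0 < t0) :
    ∃ D : ℝ, D < 0 ∧ HasDerivAt Jfun D t0 := by
  set F' : ℝ → ℝ → ℝ := fun t g => (1/g^2 - 1/g) * (Real.exp (-g/t) * (g/t^2)) with hF'def
  have key := hasDerivAt_integral_of_dominated_loc_of_deriv_le (F := fun t g =>
      (1/g^2 - 1/g) * Real.exp (-g/t)) (F' := F') (x₀ := t0)
      (μ := volume.restrict (Set.Ioi 1))
      (bound := fun g => 4/t0^2 * Real.exp (-(2/(3*t0))*g))
      (Metric.ball_mem_nhds t0 (show 0 < t0/2 by positivity))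
      ?_ ?_ ?_ ?_ ?_ ?_
  · obtain ⟨hint, hder⟩ := key
    refine ⟨_, ?_, hder⟩
    -- show the integral of F' t0 is negative
    have hneg : (0:ℝ) < ∫ g in Set.Ioi (1:ℝ), -(F' t0 g) := by
      rw [setIntegral_pos_iff_support_of_nonneg_ae]
      · have hsub : Set.Ioi (1:ℝ) ⊆ Function.support (fun g => -(F' t0 g)) ∩ Set.Ioi 1 := by
          intro g hg
          have hg1 : (1:ℝ) < g := hg
          have hgp : (0:ℝ) < g := lt_trans one_pos hg1
          have h1 : (1:ℝ)/g^2 < 1/g := by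
            rw [div_lt_div_iff₀ (by positivity) hgp]; nlinarith
          have hpos : 0 < -(F' t0 g) := by
            simp only [hF'def]
            have : (0:ℝ) < (1/g - 1/g^2) * (Real.exp (-g/t0) * (g/t0^2)) := by
              apply mul_pos (by linarith) (by positivity)
            nlinarith
          exact ⟨Function.mem_support.2 (ne_of_gt hpos), hg⟩
        refine lt_of_lt_of_le ?_ (measure_mono hsub)
        simp [Real.volume_Ioi]
      · filter_upwards [ae_restrict_mem measurableSet_Ioi] with g hg
        have hg1 : (1:ℝ) < g := hg
        have hgp : (0:ℝ) < g := lt_trans one_pos hg1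
        have h1 : (1:ℝ)/g^2 ≤ 1/g := by
          rw [div_le_div_iff₀ (by positivity) hgp]; nlinarith
        have : (0:ℝ) ≤ (1/g - 1/g^2) * (Real.exp (-g/t0) * (g/t0^2)) :=
          mul_nonneg (by linarith) (by positivity)
        simp only [Pi.zero_apply, hF'def]; nlinarith
      · exact hint.neg
    have := integral_neg (μ := volume.restrict (Set.Ioi 1)) (fun g => F' t0 g)
    rw [this] at hneg
    linarith
  · -- hF_meas
    filter_upwards with t
    apply Measurable.aestronglyMeasurable
    fun_prop
  · -- hF_int
    have hexp : IntegrableOn (fun g : ℝ => Real.exp (-(1/t0)*g)) (Set.Ioi 1) :=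
      exp_neg_integrableOn_Ioi 1 (by positivity)
    refine Integrable.mono hexp (by apply Measurable.aestronglyMeasurable; fun_prop) ?_
    rw [ae_restrict_iff' measurableSet_Ioi]
    filter_upwards with g hg
    have hg1 : (1:ℝ) < g := hg
    have hgp : (0:ℝ) < g := lt_trans one_pos hg1
    have h1 : (1:ℝ)/g^2 ≤ 1/g := by
      rw [div_le_div_iff₀ (by positivity) hgp]; nlinarith
    have h2 : (1:ℝ)/g ≤ 1 := by rw [div_le_one hgp]; linarith
    rw [Real.norm_eq_abs, Real.norm_eq_abs, abs_mul, abs_of_pos (Real.exp_pos _),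
      Real.abs_exp]
    have habs : |1/g^2 - 1/g| ≤ 1 := by
      rw [abs_le]
      constructor
      · nlinarith [one_div_nonneg.2 (pow_pos hgp 2).le]
      · nlinarith [one_div_nonneg.2 hgp.le]
    have : -g/t0 = -(1/t0)*g := by ring
    rw [this]
    nlinarith [Real.exp_pos (-(1/t0)*g)]
  · -- hF'_meas
    apply Measurable.aestronglyMeasurable
    fun_prop
  · -- h_bound
    rw [ae_restrict_iff' measurableSet_Ioi]
    filter_upwards with g hg t htb
    have hg1 : (1:ℝ) < g := hg
    have hgp : (0:ℝ) < g := lt_trans one_pos hg1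
    rw [Metric.mem_ball, Real.dist_eq, abs_lt] at htb
    have htp : 0 < t := by linarith
    have ht32 : t < 3*t0/2 := by linarith
    have h1 : (1:ℝ)/g^2 ≤ 1/g := by
      rw [div_le_div_iff₀ (by positivity) hgp]; nlinarith
    have hAg : (1/g - 1/g^2) * g ≤ 1 := by
      have : (1/g - 1/g^2) * g = 1 - 1/g := by field_simp
      rw [this]; nlinarith [one_div_nonneg.2 hgp.le]
    have hE : Real.exp (-g/t) ≤ Real.exp (-(2/(3*t0))*g) := by
      apply Real.exp_le_exp.2
      rw [neg_div, neg_mul, neg_le_neg_iff, le_div_iff₀ htp, div_mul_eq_mul_div,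
        div_mul_eq_mul_div, div_le_iff₀ (by positivity : (0:ℝ) < 3*t0)]
      nlinarith
    have ht2 : 1/t^2 ≤ 4/t0^2 := by
      rw [div_le_div_iff₀ (by positivity) (by positivity)]
      nlinarith
    rw [Real.norm_eq_abs, abs_mul, abs_of_pos (show (0:ℝ) < Real.exp (-g/t) * (g/t^2) by positivity)]
    have habs : |1/g^2 - 1/g| = 1/g - 1/g^2 := by rw [abs_of_nonpos (by linarith)]; ring
    rw [habs]
    calc (1/g - 1/g^2) * (Real.exp (-g/t) * (g/t^2))
        = ((1/g - 1/g^2) * g) * Real.exp (-g/t) * (1/t^2) := by ring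
      _ ≤ 1 * Real.exp (-(2/(3*t0))*g) * (4/t0^2) := by
          apply mul_le_mul _ ht2 (by positivity) (by positivity)
          apply mul_le_mul hAg hE (Real.exp_pos _).le (by linarith)
      _ = 4/t0^2 * Real.exp (-(2/(3*t0))*g) := by ring
  · -- bound_integrable
    exact (exp_neg_integrableOn_Ioi 1 (by positivity)).const_mul _
  · -- h_diff
    filter_upwards with g t htb
    rw [Metric.mem_ball, Real.dist_eq, abs_lt] at htb
    have htp : 0 < t := by linarith
    have h1 : HasDerivAt (fun s : ℝ => -g/s) (g/t^2) t := by
      have h0 : HasDerivAt (fun s : ℝ => -g / s) ((0 * t - -g * 1) / t ^ 2) t := (hasDerivAt_const t (-g)).div (hasDerivAt_id t) (ne_of_gt htp)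
      convert h0 using 1
      simp
    exact h1.exp.const_mul _

theorem stmt_16 (a b γ : ℝ) (c : ℝ → ℝ) (ha : 0 < a) (hab : a < b) (hγ : 0 < γ)
    (hcpos : ∀ x ∈ Set.Ioo a b, 0 < c x)
    (hdiff : DifferentiableOn ℝ c (Set.Ioo a b))
    (heq : ∀ x ∈ Set.Ioo a b,
      (∫ g in Set.Ioi (1:ℝ),
          (c x / g ^ 2 - c x / g) * Real.exp (-g / (c x * x))) + γ = 0) :
    ∀ x ∈ Set.Ioo a b,
      deriv c x * deriv (fun y => y * c y) x < 0 ∧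
      deriv c x < 0 ∧ 0 < deriv (fun y => y * c y) x := by
  have hJeq : ∀ x ∈ Set.Ioo a b, c x * Jfun (c x * x) = -γ := by
    intro x hx
    have h := heq x hx
    have hre : (∫ g in Set.Ioi (1:ℝ),
        (c x / g ^ 2 - c x / g) * Real.exp (-g / (c x * x)))
        = c x * Jfun (c x * x) := by
      rw [Jfun, ← integral_const_mul]
      congr 1; funext g; ring
    rw [hre] at h; linarith
  intro x0 hx0
  obtain ⟨hax, hxb⟩ := hx0
  have hx0' : x0 ∈ Set.Ioo a b := ⟨hax, hxb⟩
  have hx0pos : 0 < x0 := ha.trans hax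
  have hc0 : 0 < c x0 := hcpos x0 hx0'
  have ht0 : 0 < c x0 * x0 := mul_pos hc0 hx0pos
  obtain ⟨D, hD, hJder⟩ := J_deriv ht0
  have hcd : DifferentiableAt ℝ c x0 :=
    (hdiff x0 hx0').differentiableAt (isOpen_Ioo.mem_nhds hx0')
  have hcD : HasDerivAt c (deriv c x0) x0 := hcd.hasDerivAt
  set c' := deriv c x0 with hc'def
  have hT : HasDerivAt (fun x => c x * x) (c' * x0 + c x0 * 1) x0 :=
    hcD.mul (hasDerivAt_id x0)
  have hcomp : HasDerivAt (fun x => Jfun (c x * x)) (D * (c' * x0 + c x0 * 1)) x0 :=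
    HasDerivAt.comp (h := fun x => c x * x) x0 hJder hT
  have hFull : HasDerivAt (fun x => c x * Jfun (c x * x))
      (c' * Jfun (c x0 * x0) + c x0 * (D * (c' * x0 + c x0 * 1))) x0 := hcD.mul hcomp
  have hconst : HasDerivAt (fun x : ℝ => c x * Jfun (c x * x)) 0 x0 := by
    have hev : (fun x : ℝ => c x * Jfun (c x * x)) =ᶠ[nhds x0] (fun _ => -γ) := by
      filter_upwards [isOpen_Ioo.mem_nhds hx0'] with y hy using hJeq y hy
    exact (hasDerivAt_const x0 (-γ)).congr_of_eventuallyEq hev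
  have heq0 : c' * Jfun (c x0 * x0) + c x0 * (D * (c' * x0 + c x0 * 1)) = 0 :=
    hFull.unique hconst
  have hJ0 : Jfun (c x0 * x0) < 0 := by
    have h := hJeq x0 hx0'
    nlinarith
  have hvD : HasDerivAt (fun y => y * c y) (1 * c x0 + x0 * c') x0 :=
    (hasDerivAt_id x0).mul hcD
  have hv : deriv (fun y => y * c y) x0 = 1 * c x0 + x0 * c' := hvD.deriv
  set J0 := Jfun (c x0 * x0)
  have hc'neg : c' < 0 := by
    by_contra h; push_neg at h
    nlinarith [mul_nonneg h (neg_pos.2 hJ0).le,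
      mul_pos (mul_pos hc0 (neg_pos.2 hD)) hc0,
      mul_nonneg (mul_nonneg (mul_nonneg hc0.le (neg_pos.2 hD).le) h) hx0pos.le]
  have hVpos : 0 < c' * x0 + c x0 := by
    by_contra h; push_neg at h
    nlinarith [mul_pos (neg_pos.2 hc'neg) (neg_pos.2 hJ0),
      mul_nonneg (mul_nonneg hc0.le (neg_pos.2 hD).le) (neg_nonneg.2 h)]
  refine ⟨?_, hc'neg, ?_⟩
  · rw [hv]
    apply mul_neg_of_neg_of_pos hc'neg
    nlinarith
  · rw [hv]; nlinarith
end
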